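/- arXiv:0906.4706 — 3 statements merged into one kernel-verified Lean document; each statement's English description precedes it below -/
import Mathlib

section
/- In a violator space, every extreme element of R belongs to every basis of R; consequently |X(R)| ≤ dim(H,V) for all R ⊆ H. -/
/-!
If `s ∈ R` is missing from a basis `B` of `R`, then `B ⊆ R \ {s} ⊆ R`, and since `R \ {s}`
avoids `V(R) = V(B)`, locality gives `V(R \ {s}) = V(B) = V(R)`; so `s` is not extreme.
Every `R` has a basis (take a minimal subset with the same violators), and it contains `X(R)`.
-/

open Finset

/-- A violator space: a finite set `H` together with a violator mapping `V : 2^H → 2^H`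
satisfying consistency and locality. -/
structure ViolatorSpace (H : Type*) [Fintype H] [DecidableEq H] where
  V : Finset H → Finset H
  consistency : ∀ G : Finset H, Disjoint G (V G)
  locality : ∀ F G : Finset H, F ⊆ G → Disjoint G (V F) → V G = V F

/-- `B` is a basis of `G` for the mapping `W`: a minimal subset of `G` with the
same violators as `G`. -/
def IsBasisOf {H : Type*} [Fintype H] [DecidableEq H]
    (W : Finset H → Finset H) (B G : Finset H) : Prop :=
  B ⊆ G ∧ W B = W G ∧ ∀ B' : Finset H, B' ⊂ B → W B' ≠ W G

namespace ViolatorSpace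

variable {H : Type*} [Fintype H] [DecidableEq H]

theorem V_eq_of_subset_of_subset (VS : ViolatorSpace H) {B G R : Finset H}
    (hBG : B ⊆ G) (hGR : G ⊆ R) (hBR : VS.V B = VS.V R) : VS.V G = VS.V R := by
  have hdisj : Disjoint G (VS.V B) := hBR ▸ (VS.consistency R).mono_left hGR
  exact (VS.locality B G hBG hdisj).trans hBR

theorem mem_of_isBasisOf_of_V_erase_ne (VS : ViolatorSpace H) {B R : Finset H}
    (hB : IsBasisOf VS.V B R) {s : H} (hne : VS.V (R.erase s) ≠ VS.V R) :
    s ∈ B := by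
  by_contra hsB
  have hBsub : B ⊆ R.erase s := fun x hx => mem_erase.mpr ⟨fun h => hsB (h ▸ hx), hB.1 hx⟩
  exact hne (VS.V_eq_of_subset_of_subset hBsub (erase_subset s R) hB.2.1)

theorem filter_V_erase_ne_subset (VS : ViolatorSpace H) {B R : Finset H}
    (hB : IsBasisOf VS.V B R) : R.filter (fun s => VS.V (R.erase s) ≠ VS.V R) ⊆ B :=
  fun _ hs => VS.mem_of_isBasisOf_of_V_erase_ne hB (mem_filter.mp hs).2

end ViolatorSpace

theorem exists_isBasisOf {H : Type*} [Fintype H] [DecidableEq H]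
    (W : Finset H → Finset H) (R : Finset H) : ∃ B, IsBasisOf W B R := by
  obtain ⟨B, ⟨hBR, hBW⟩, hmin⟩ :=
    wellFounded_lt.has_min {B : Finset H | B ⊆ R ∧ W B = W R} ⟨R, subset_rfl, rfl⟩
  exact ⟨B, hBR, hBW, fun B' hB' hW' => hmin B' ⟨hB'.subset.trans hBR, hW'⟩ hB'⟩

/-- In a violator space, every extreme element of `R` (an `s ∈ R` with
`V(R \ {s}) ≠ V(R)`) belongs to every basis of `R`; consequently
`|X(R)| ≤ dim(H, V)` (where `d` bounds the size of every basis). -/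
theorem extreme_in_every_basis {H : Type*} [Fintype H] [DecidableEq H]
    (VS : ViolatorSpace H) (d : ℕ)
    (hd : ∀ G B : Finset H, IsBasisOf VS.V B G → B.card ≤ d) :
    (∀ R B : Finset H, IsBasisOf VS.V B R →
      ∀ s ∈ R, VS.V (R.erase s) ≠ VS.V R → s ∈ B) ∧
    (∀ R : Finset H,
      (R.filter (fun s => VS.V (R.erase s) ≠ VS.V R)).card ≤ d) := by
  refine ⟨fun _ _ hB _ _ => VS.mem_of_isBasisOf_of_V_erase_ne hB, fun R => ?_⟩
  obtain ⟨B, hB⟩ := exists_isBasisOf VS.V R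
  exact (card_le_card (VS.filter_V_erase_ne_subset hB)).trans (hd R B hB)
end

section
/- With V' defined from the German Algorithm as above, for every R ⊆ H one has V'(R) = V_R^(1) ∪ ... ∪ V_R^(d) = G_R^(d) \ R. -/
open Finset

/-- The working sets of the German Algorithm started from `R`:
`G⁽⁰⁾ = R` and `G⁽ⁱ⁺¹⁾ = G⁽ⁱ⁾ ∪ V(G⁽ⁱ⁾)`.  (Round `i ≥ 1` of the algorithm
computes a basis of `G⁽ⁱ⁻¹⁾`, whose violator set is `V⁽ⁱ⁾ = V(G⁽ⁱ⁻¹⁾)`;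
once the violator set is empty the sequence stabilizes, matching the
convention that sets of later rounds equal those of the final round.) -/
def Gseq {H : Type*} [Fintype H] [DecidableEq H]
    (VS : ViolatorSpace H) (R : Finset H) : ℕ → Finset H
  | 0 => R
  | (i + 1) => Gseq VS R i ∪ VS.V (Gseq VS R i)

/-- The derived violator mapping of the German Algorithm:
`V'(R) = {h ∈ H \ R : Γ(R) ≠ Γ(R ∪ {h})}`, where
`Γ(R) = (V_R⁽¹⁾, …, V_R⁽ᵈ⁾)` is the tuple of violator sets of the first `d`
rounds of the German Algorithm started from `R` (here `V_R⁽ⁱ⁺¹⁾ = V(G_R⁽ⁱ⁾)`). -/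
def Vprime {H : Type*} [Fintype H] [DecidableEq H]
    (VS : ViolatorSpace H) (d : ℕ) (R : Finset H) : Finset H :=
  univ.filter (fun h => h ∉ R ∧
    ∃ i ∈ Finset.range d,
      VS.V (Gseq VS R i) ≠ VS.V (Gseq VS (insert h R) i))

/-! If `h` lies outside `G_R⁽ᵈ⁾`, locality shows by induction that adding `h` to `R` only adds
`h` to every `G_R⁽ʲ⁾` with `j ≤ d` and leaves the violator sets of the first `d` rounds unchanged.
Conversely, if `h ∈ V_R⁽ⁱ⁾` then `h ∈ G_{R ∪ {h}}⁽ⁱ⁻¹⁾`, so by consistency `h ∉ V_{R ∪ {h}}⁽ⁱ⁾`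
and the two tuples differ. Hence `V'(R) = ⋃ᵢ V_R⁽ⁱ⁾`, which is `G_R⁽ᵈ⁾ \ R` by unfolding `Gseq`. -/

namespace ViolatorSpace

variable {H : Type*} [Fintype H] [DecidableEq H] (VS : ViolatorSpace H)

theorem V_insert_eq {F : Finset H} {h : H} (hh : h ∉ VS.V F) : VS.V (insert h F) = VS.V F :=
  VS.locality F _ (subset_insert h F) (disjoint_insert_left.mpr ⟨hh, VS.consistency F⟩)

theorem subset_Gseq (R : Finset H) : ∀ i, R ⊆ Gseq VS R i
  | 0 => subset_rfl
  | i + 1 => (subset_Gseq R i).trans subset_union_left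

theorem disjoint_V_Gseq (R : Finset H) (i : ℕ) : Disjoint R (VS.V (Gseq VS R i)) :=
  (VS.consistency _).mono_left (VS.subset_Gseq R i)

theorem Gseq_eq_union_biUnion (R : Finset H) (n : ℕ) :
    Gseq VS R n = R ∪ (range n).biUnion (fun i => VS.V (Gseq VS R i)) := by
  induction n with
  | zero => simp [Gseq]
  | succ n ih => rw [Gseq, range_add_one, biUnion_insert, union_left_comm, ← ih, union_comm]

theorem V_Gseq_subset_Gseq (R : Finset H) {i n : ℕ} (hin : i < n) :
    VS.V (Gseq VS R i) ⊆ Gseq VS R n := by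
  rw [VS.Gseq_eq_union_biUnion R n]
  exact (subset_biUnion_of_mem (fun i => VS.V (Gseq VS R i)) (mem_range.mpr hin)).trans subset_union_right

theorem Gseq_insert_of_notMem {R : Finset H} {h : H} {d : ℕ} (hh : h ∉ Gseq VS R d) :
    ∀ j ≤ d, Gseq VS (insert h R) j = insert h (Gseq VS R j)
  | 0, _ => rfl
  | j + 1, hj => by
    have ih := Gseq_insert_of_notMem hh j (by omega)
    have hV : h ∉ VS.V (Gseq VS R j) := fun hmem => hh (VS.V_Gseq_subset_Gseq R hj hmem)
    rw [Gseq, Gseq, ih, VS.V_insert_eq hV, insert_union]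

theorem V_Gseq_insert_of_notMem {R : Finset H} {h : H} {d j : ℕ} (hh : h ∉ Gseq VS R d)
    (hj : j < d) : VS.V (Gseq VS (insert h R) j) = VS.V (Gseq VS R j) := by
  rw [VS.Gseq_insert_of_notMem hh j hj.le]
  exact VS.V_insert_eq fun hmem => hh (VS.V_Gseq_subset_Gseq R hj hmem)

theorem V_Gseq_insert_ne {R : Finset H} {h : H} {i : ℕ} (hh : h ∈ VS.V (Gseq VS R i)) :
    VS.V (Gseq VS R i) ≠ VS.V (Gseq VS (insert h R) i) := by
  intro e
  have hG : h ∈ Gseq VS (insert h R) i := VS.subset_Gseq _ i (mem_insert_self h R)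
  exact disjoint_left.mp (VS.consistency _) hG (e ▸ hh)

theorem mem_Vprime_iff (d : ℕ) (R : Finset H) (h : H) :
    h ∈ Vprime VS d R ↔ ∃ i ∈ range d, h ∈ VS.V (Gseq VS R i) := by
  simp only [Vprime, mem_filter, mem_univ, true_and]
  constructor
  · rintro ⟨hR, i, hi, hne⟩
    by_contra! hout
    have hh : h ∉ Gseq VS R d := by
      rw [Gseq_eq_union_biUnion, mem_union, mem_biUnion, not_or, not_exists]
      exact ⟨hR, fun j ⟨hj, hmem⟩ => hout j hj hmem⟩
    exact hne (VS.V_Gseq_insert_of_notMem hh (mem_range.mp hi)).symm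
  · rintro ⟨i, hi, hmem⟩
    exact ⟨disjoint_right.mp (VS.disjoint_V_Gseq R i) hmem, i, hi, VS.V_Gseq_insert_ne hmem⟩

end ViolatorSpace

theorem Vprime_eq_union_general {H : Type*} [Fintype H] [DecidableEq H]
    (VS : ViolatorSpace H) (d : ℕ)
    (R : Finset H) :
    Vprime VS d R = (Finset.range d).biUnion (fun i => VS.V (Gseq VS R i)) ∧
    Vprime VS d R = Gseq VS R d \ R := by
  have hunion : Vprime VS d R = (range d).biUnion (fun i => VS.V (Gseq VS R i)) := by
    ext h
    rw [VS.mem_Vprime_iff, mem_biUnion]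
  refine ⟨hunion, ?_⟩
  rw [hunion, VS.Gseq_eq_union_biUnion, union_sdiff_cancel_left]
  exact (disjoint_biUnion_right _ _ _).mpr fun i _ => VS.disjoint_V_Gseq R i

/-- **Lemma 4 (ii).** For every `R ⊆ H`,
`V'(R) = V_R⁽¹⁾ ∪ … ∪ V_R⁽ᵈ⁾ = G_R⁽ᵈ⁾ \ R`. -/
theorem Vprime_eq_union {H : Type*} [Fintype H] [DecidableEq H]
    (VS : ViolatorSpace H) (d : ℕ)
    (hd : ∀ G B : Finset H, IsBasisOf VS.V B G → B.card ≤ d)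
    (R : Finset H) :
    Vprime VS d R = (Finset.range d).biUnion (fun i => VS.V (Gseq VS R i)) ∧
    Vprime VS d R = Gseq VS R d \ R :=
  Vprime_eq_union_general VS d R
end

section
/- In SA_forever on a violator space (H, V) with |H| = n and dimension d, sampling r elements per round, the expected total multiplicity after ℓ rounds satisfies E[μ^(ℓ)(H)] ≤ n(1 + d/r)^ℓ. -/
open Finset

/-- The uniform distribution on the `r`-element subsets of `s` (with a junk
value when no such subset exists, which never occurs along the algorithm). -/
noncomputable def sampleDist {β : Type*} [DecidableEq β] (s : Finset β) (r : ℕ) :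
    PMF (Finset β) :=
  if h : (s.powersetCard r).Nonempty then PMF.uniformOfFinset _ h else PMF.pure ∅

/-- The multiset `Ĥ` induced by the multiplicities `μ`: it contains the `μ h`
copies `(h, 0), …, (h, μ h - 1)` of each element `h ∈ H`. -/
def hatH {H : Type*} [Fintype H] [DecidableEq H] (μ : H → ℕ) : Finset (H × ℕ) :=
  univ.biUnion (fun h => (Finset.range (μ h)).image (fun j => (h, j)))

/-- `SA_forever`, the Swiss Algorithm run forever: `proc VS r ℓ` is the joint
distribution, after `ℓ` rounds, of the multiplicity vector `μ⁽ˡ⁾` and of the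
indicator of the event `C_ℓ` that the first `ℓ` rounds were all controversial.
Each round draws a uniformly random `r`-element subset of the multiset `Ĥ`,
collapses it to a set `R ⊆ H`, and doubles the multiplicity of every violator
of (a basis of) `R`; the round is controversial if `V(R) ≠ ∅`. -/
noncomputable def proc {H : Type*} [Fintype H] [DecidableEq H]
    (VS : ViolatorSpace H) (r : ℕ) : ℕ → PMF ((H → ℕ) × Bool)
  | 0 => PMF.pure (fun _ => 1, true)
  | (ℓ + 1) => (proc VS r ℓ).bind fun p =>
      (sampleDist (hatH p.1) r).map fun Rhat =>
        (fun h => if h ∈ VS.V (Rhat.image Prod.fst) then 2 * p.1 h else p.1 h,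
         p.2 && decide (VS.V (Rhat.image Prod.fst) ≠ ∅))

open scoped ENNReal

/-!
Given the multiplicities `μ` of one round, with total `t ≥ r`, the sample is a uniform
`r`-subset `R` of the multiset `Ĥ`. Violation lifts to `Ĥ` through the first projection, and
every `(r+1)`-subset of `Ĥ` still has at most `d` extreme elements, so the Sampling Lemma
bounds the expected added multiplicity `μ(V(R))` by `d (t - r) / (r + 1) ≤ d t / r`. The
expected total therefore grows by a factor of at most `1 + d / r` per round, starting from `n`.
-/

namespace PMF

variable {α β : Type*}

theorem tsum_bind_mul (p : PMF α) (f : α → PMF β) (g : β → ℝ≥0∞) :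
    ∑' b, p.bind f b * g b = ∑' a, p a * ∑' b, f a b * g b := by
  simp only [bind_apply, ← ENNReal.tsum_mul_right, ← ENNReal.tsum_mul_left, mul_assoc]
  exact ENNReal.tsum_comm

theorem tsum_map_mul (p : PMF α) (k : α → β) (g : β → ℝ≥0∞) :
    ∑' b, p.map k b * g b = ∑' a, p a * g (k a) := by
  rw [map, tsum_bind_mul]
  simp [pure_apply]

theorem tsum_uniformOfFinset_mul (s : Finset α) (hs : s.Nonempty) (g : α → ℝ≥0∞) :
    ∑' a, uniformOfFinset s hs a * g a = (#s : ℝ≥0∞)⁻¹ * ∑ a ∈ s, g a := by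
  rw [tsum_eq_sum (s := s) fun a ha => by simp [uniformOfFinset_apply, ha], mul_sum]
  exact sum_congr rfl fun a ha => by simp [uniformOfFinset_apply, ha]

end PMF

theorem sum_card_violators_eq_sum_card_extreme {α : Type*} [DecidableEq α]
    (P : Finset α → α → Prop) [∀ R, DecidablePred (P R)] (S : Finset α) (r : ℕ) :
    ∑ R ∈ S.powersetCard r, #{x ∈ S \ R | P R x} =
      ∑ Q ∈ S.powersetCard (r + 1), #{x ∈ Q | P (Q.erase x) x} := by
  simp only [← card_sigma]
  refine card_nbij' (fun p => ⟨insert p.2 p.1, p.2⟩) (fun q => ⟨q.1.erase q.2, q.2⟩)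
    ?_ ?_ ?_ ?_
  · rintro ⟨R, x⟩ hp
    simp only [coe_sigma, Set.mem_sigma_iff, mem_coe, mem_powersetCard, mem_filter,
      mem_sdiff] at hp ⊢
    obtain ⟨⟨hRS, rfl⟩, ⟨hxS, hxR⟩, hP⟩ := hp
    refine ⟨⟨insert_subset hxS hRS, card_insert_of_notMem hxR⟩, mem_insert_self x R, ?_⟩
    rwa [erase_insert hxR]
  · rintro ⟨Q, x⟩ hq
    simp only [coe_sigma, Set.mem_sigma_iff, mem_coe, mem_powersetCard, mem_filter,
      mem_sdiff] at hq ⊢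
    obtain ⟨⟨hQS, hQ⟩, hxQ, hP⟩ := hq
    refine ⟨⟨(erase_subset x Q).trans hQS, by rw [card_erase_of_mem hxQ, hQ]; rfl⟩,
      ⟨hQS hxQ, notMem_erase x Q⟩, hP⟩
  · rintro ⟨R, x⟩ hp
    simp only [coe_sigma, Set.mem_sigma_iff, mem_coe, mem_filter, mem_sdiff] at hp
    simp [erase_insert hp.2.1.2]
  · rintro ⟨Q, x⟩ hq
    simp only [coe_sigma, Set.mem_sigma_iff, mem_coe, mem_filter] at hq
    simp [insert_erase hq.2.1]

namespace ViolatorSpace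

variable {H : Type*} [Fintype H] [DecidableEq H] (VS : ViolatorSpace H)

theorem exists_isBasisOf (G : Finset H) : ∃ B, IsBasisOf VS.V B G := by
  obtain ⟨B, hB, hmin⟩ := exists_min_image {B ∈ G.powerset | VS.V B = VS.V G} card
    ⟨G, by simp⟩
  rw [mem_filter, mem_powerset] at hB
  refine ⟨B, hB.1, hB.2, fun B' hB'B hB' => ?_⟩
  have := hmin B' (mem_filter.2 ⟨mem_powerset.2 (hB'B.subset.trans hB.1), hB'⟩)
  exact this.not_gt (card_lt_card hB'B)

theorem mem_of_isBasisOf_of_mem_V_erase {G B : Finset H} {h : H} (hB : IsBasisOf VS.V B G)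
    (hG : h ∈ G) (hV : h ∈ VS.V (G.erase h)) : h ∈ B := by
  by_contra hhB
  have hBG : B ⊆ G.erase h := fun x hx => mem_erase.2 ⟨fun e => hhB (e ▸ hx), hB.1 hx⟩
  have hdisj : Disjoint (G.erase h) (VS.V B) := by
    rw [hB.2.1]
    exact (VS.consistency G).mono_left (erase_subset h G)
  rw [VS.locality B _ hBG hdisj, hB.2.1] at hV
  exact disjoint_left.1 (VS.consistency G) hG hV

/-- An extreme copy `x` is the only copy of `x.1` in `Q`, and `x.1` lies in every basis of
`Q.image Prod.fst`. -/
theorem card_extreme_le {d : ℕ} (hd : ∀ G B : Finset H, IsBasisOf VS.V B G → #B ≤ d)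
    (Q : Finset (H × ℕ)) : #{x ∈ Q | x.1 ∈ VS.V ((Q.erase x).image Prod.fst)} ≤ d := by
  obtain ⟨B, hB⟩ := VS.exists_isBasisOf (Q.image Prod.fst)
  set X := {x ∈ Q | x.1 ∈ VS.V ((Q.erase x).image Prod.fst)}
  have unique_copy : ∀ x ∈ X, ∀ y ∈ Q, y.1 = x.1 → y = x := by
    intro x hx y hy hyx
    by_contra hne
    exact disjoint_left.1 (VS.consistency _)
      (mem_image.2 ⟨y, mem_erase.2 ⟨hne, hy⟩, hyx⟩) (mem_filter.1 hx).2
  have image_erase : ∀ x ∈ X, (Q.erase x).image Prod.fst = (Q.image Prod.fst).erase x.1 := by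
    intro x hx
    ext g
    simp only [mem_image, mem_erase]
    constructor
    · rintro ⟨y, ⟨hyx, hy⟩, rfl⟩
      exact ⟨fun e => hyx (unique_copy x hx y hy e), y, hy, rfl⟩
    · rintro ⟨hg, y, hy, rfl⟩
      exact ⟨y, ⟨fun e => hg (e ▸ rfl), hy⟩, rfl⟩
  have fst_mem_basis : ∀ x ∈ X, x.1 ∈ B := by
    intro x hx
    obtain ⟨hxQ, hxV⟩ := mem_filter.1 hx
    rw [image_erase x hx] at hxV
    exact VS.mem_of_isBasisOf_of_mem_V_erase hB (mem_image_of_mem _ hxQ) hxV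
  calc #X = #(X.image Prod.fst) :=
        (card_image_of_injOn fun x hx y hy e =>
          (unique_copy x hx y (mem_filter.1 hy).1 e.symm).symm).symm
    _ ≤ #B := card_le_card (image_subset_iff.2 fst_mem_basis)
    _ ≤ d := hd _ _ hB

end ViolatorSpace

section Multiplicities

variable {H : Type*} [DecidableEq H]

def doubleOn (A : Finset H) (μ : H → ℕ) : H → ℕ := fun h => if h ∈ A then 2 * μ h else μ h

theorem le_doubleOn (A : Finset H) (μ : H → ℕ) (h : H) : μ h ≤ doubleOn A μ h := by
  unfold doubleOn
  split_ifs <;> omega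

variable [Fintype H]

theorem mem_hatH {μ : H → ℕ} {x : H × ℕ} : x ∈ hatH μ ↔ x.2 < μ x.1 := by
  simp [hatH, Prod.ext_iff, eq_comm]

theorem card_filter_hatH (μ : H → ℕ) (A : Finset H) :
    #{x ∈ hatH μ | x.1 ∈ A} = ∑ h ∈ A, μ h := by
  have : {x ∈ hatH μ | x.1 ∈ A} =
      (A.sigma fun h => range (μ h)).map (Equiv.sigmaEquivProd H ℕ).toEmbedding := by
    ext ⟨h, j⟩
    simp [mem_hatH, and_comm]
  rw [this, card_map, card_sigma]
  simp

theorem card_hatH (μ : H → ℕ) : #(hatH μ) = ∑ h, μ h := by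
  simpa using card_filter_hatH μ univ

theorem sum_doubleOn (A : Finset H) (μ : H → ℕ) :
    ∑ h, doubleOn A μ h = ∑ h, μ h + ∑ h ∈ A, μ h := by
  have : ∀ h, doubleOn A μ h = μ h + if h ∈ A then μ h else 0 := fun h => by
    unfold doubleOn
    split_ifs <;> ring
  simp only [this, sum_add_distrib, sum_ite_mem, univ_inter]

end Multiplicities

namespace ViolatorSpace

variable {H : Type*} [Fintype H] [DecidableEq H] (VS : ViolatorSpace H) {d : ℕ}

/-- Sampling Lemma on the multiset extension `Ĥ`: the violators of an `r`-sample `R`, counted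
with multiplicity, are the copies outside `R` whose element violates `R`, and each
`(r+1)`-subset of `Ĥ` has at most `d` extreme elements. -/
theorem sum_weight_violators_mul_le (hd : ∀ G B : Finset H, IsBasisOf VS.V B G → #B ≤ d)
    (μ : H → ℕ) (r : ℕ) :
    (∑ R ∈ (hatH μ).powersetCard r, ∑ h ∈ VS.V (R.image Prod.fst), μ h) * (r + 1) ≤
      d * (∑ h, μ h - r) * (∑ h, μ h).choose r := by
  set t := ∑ h, μ h
  have weight_eq : ∀ R ∈ (hatH μ).powersetCard r, ∑ h ∈ VS.V (R.image Prod.fst), μ h =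
      #{x ∈ hatH μ \ R | x.1 ∈ VS.V (R.image Prod.fst)} := by
    intro R _
    rw [← card_filter_hatH]
    congr 1
    ext x
    simp only [mem_filter, mem_sdiff, and_congr_left_iff, iff_self_and]
    exact fun hx _ hxR => disjoint_left.1 (VS.consistency _) (mem_image_of_mem _ hxR) hx
  calc (∑ R ∈ (hatH μ).powersetCard r, ∑ h ∈ VS.V (R.image Prod.fst), μ h) * (r + 1)
      = (∑ Q ∈ (hatH μ).powersetCard (r + 1),
          #{x ∈ Q | x.1 ∈ VS.V ((Q.erase x).image Prod.fst)}) * (r + 1) := by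
        rw [sum_congr rfl weight_eq, sum_card_violators_eq_sum_card_extreme]
    _ ≤ (#((hatH μ).powersetCard (r + 1)) * d) * (r + 1) := by
        gcongr
        exact sum_le_card_nsmul _ _ _ fun Q _ => VS.card_extreme_le hd Q
    _ = d * (t.choose (r + 1) * (r + 1)) := by rw [card_powersetCard, card_hatH]; ring
    _ = d * (t - r) * t.choose r := by rw [Nat.choose_succ_right_eq]; ring

theorem expected_weight_violators_le (hd : ∀ G B : Finset H, IsBasisOf VS.V B G → #B ≤ d)
    {μ : H → ℕ} {r : ℕ} (hr : r ≤ ∑ h, μ h) :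
    ∑' R, sampleDist (hatH μ) r R * ∑ h ∈ VS.V (R.image Prod.fst), (μ h : ℝ≥0∞) ≤
      (d * (∑ h, μ h - r) : ℕ) / (r + 1 : ℝ≥0∞) := by
  set t := ∑ h, μ h
  have hne : ((hatH μ).powersetCard r).Nonempty := by
    rwa [powersetCard_nonempty, card_hatH]
  have hC : #((hatH μ).powersetCard r) = t.choose r := by rw [card_powersetCard, card_hatH]
  have hC0 : (t.choose r : ℝ≥0∞) ≠ 0 := by exact_mod_cast (Nat.choose_pos hr).ne'
  rw [sampleDist, dif_pos hne, PMF.tsum_uniformOfFinset_mul, hC,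
    ENNReal.le_div_iff_mul_le (by simp) (by simp)]
  calc ((t.choose r : ℝ≥0∞)⁻¹ * ∑ R ∈ (hatH μ).powersetCard r,
        ∑ h ∈ VS.V (R.image Prod.fst), (μ h : ℝ≥0∞)) * (r + 1)
      = (t.choose r : ℝ≥0∞)⁻¹ * ((∑ R ∈ (hatH μ).powersetCard r,
          ∑ h ∈ VS.V (R.image Prod.fst), μ h) * (r + 1) : ℕ) := by push_cast; ring
    _ ≤ (t.choose r : ℝ≥0∞)⁻¹ * (d * (t - r) * t.choose r : ℕ) := by
        gcongr _ * ?_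
        exact_mod_cast VS.sum_weight_violators_mul_le hd μ r
    _ = (d * (t - r) : ℕ) := by
        rw [Nat.cast_mul _ (t.choose r), mul_comm, mul_assoc,
          ENNReal.mul_inv_cancel hC0 (by simp), mul_one]

theorem expected_sum_doubleOn_le (hd : ∀ G B : Finset H, IsBasisOf VS.V B G → #B ≤ d)
    {μ : H → ℕ} {r : ℕ} (hr : r ≤ ∑ h, μ h) :
    ∑' R, sampleDist (hatH μ) r R * ∑ h, (doubleOn (VS.V (R.image Prod.fst)) μ h : ℝ≥0∞) ≤
      (1 + d / r) * ∑ h, (μ h : ℝ≥0∞) := by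
  set t : ℝ≥0∞ := ∑ h, (μ h : ℝ≥0∞)
  have hsum : ∀ R : Finset (H × ℕ), ∑ h, (doubleOn (VS.V (R.image Prod.fst)) μ h : ℝ≥0∞) =
      t + ∑ h ∈ VS.V (R.image Prod.fst), (μ h : ℝ≥0∞) := fun R => by
    have := congrArg (Nat.cast : ℕ → ℝ≥0∞) (sum_doubleOn (VS.V (R.image Prod.fst)) μ)
    push_cast at this
    exact this
  simp only [hsum, mul_add, ENNReal.tsum_add, ENNReal.tsum_mul_right, PMF.tsum_coe, one_mul]
  calc t + ∑' R, sampleDist (hatH μ) r R * ∑ h ∈ VS.V (R.image Prod.fst), (μ h : ℝ≥0∞)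
      ≤ t + (d * (∑ h, μ h - r) : ℕ) / (r + 1 : ℝ≥0∞) := by
        gcongr
        exact VS.expected_weight_violators_le hd hr
    _ ≤ t + d * t / r := by
        gcongr
        · rw [Nat.cast_mul]
          gcongr
          exact (Nat.cast_le.2 (Nat.sub_le _ r)).trans_eq (Nat.cast_sum _ _)
        · exact le_self_add
    _ = (1 + d / r) * t := by rw [add_mul, one_mul, ENNReal.mul_div_right_comm]

end ViolatorSpace

theorem one_le_of_mem_support_proc {H : Type*} [Fintype H] [DecidableEq H]
    (VS : ViolatorSpace H) (r : ℕ) {ℓ : ℕ} {p : (H → ℕ) × Bool}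
    (hp : p ∈ (proc VS r ℓ).support) (h : H) : 1 ≤ p.1 h := by
  induction ℓ generalizing p with
  | zero =>
    rw [proc, PMF.mem_support_pure_iff] at hp
    simp [hp]
  | succ ℓ ih =>
    rw [proc, PMF.mem_support_bind_iff] at hp
    obtain ⟨q, hq, hpq⟩ := hp
    rw [PMF.support_map] at hpq
    obtain ⟨R, -, rfl⟩ := hpq
    exact (ih hq).trans (le_doubleOn _ q.1 h)

theorem expected_total_proc_succ_le {H : Type*} [Fintype H] [DecidableEq H]
    (VS : ViolatorSpace H) {d r : ℕ} (hr : r ≤ Fintype.card H)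
    (hd : ∀ G B : Finset H, IsBasisOf VS.V B G → #B ≤ d) (ℓ : ℕ) :
    ∑' x, proc VS r (ℓ + 1) x * ∑ h, (x.1 h : ℝ≥0∞) ≤
      (1 + d / r) * ∑' x, proc VS r ℓ x * ∑ h, (x.1 h : ℝ≥0∞) := by
  have step : ∀ p, proc VS r ℓ p * ∑' R, sampleDist (hatH p.1) r R *
        ∑ h, (doubleOn (VS.V (R.image Prod.fst)) p.1 h : ℝ≥0∞) ≤
      proc VS r ℓ p * ((1 + d / r) * ∑ h, (p.1 h : ℝ≥0∞)) := by
    intro p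
    rcases eq_or_ne (proc VS r ℓ p) 0 with hp | hp
    · simp [hp]
    have card_le : Fintype.card H ≤ ∑ h, p.1 h := by
      simpa using sum_le_sum fun h (_ : h ∈ univ) => one_le_of_mem_support_proc VS r hp h
    gcongr
    exact VS.expected_sum_doubleOn_le hd (hr.trans card_le)
  calc _ = ∑' p, proc VS r ℓ p * ∑' R, sampleDist (hatH p.1) r R *
        ∑ h, (doubleOn (VS.V (R.image Prod.fst)) p.1 h : ℝ≥0∞) := by
        simp only [proc, PMF.tsum_bind_mul, PMF.tsum_map_mul]
        rfl
    _ ≤ ∑' p, proc VS r ℓ p * ((1 + d / r) * ∑ h, (p.1 h : ℝ≥0∞)) := ENNReal.tsum_le_tsum step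
    _ = _ := by
        rw [← ENNReal.tsum_mul_left]
        exact tsum_congr fun p => mul_left_comm _ _ _

/-- **Upper bound lemma.** In `SA_forever` on a violator space with `|H| = n`
and combinatorial dimension `d`, sampling `r ≤ n` elements per round, the
expected total multiplicity after `ℓ` rounds satisfies
`E[μ⁽ˡ⁾(H)] ≤ n (1 + d/r)^ℓ`. -/
theorem swiss_upper_bound {H : Type*} [Fintype H] [DecidableEq H]
    (VS : ViolatorSpace H) (d r n : ℕ) (hn : Fintype.card H = n) (hr : r ≤ n)
    (hd : ∀ G B : Finset H, IsBasisOf VS.V B G → B.card ≤ d)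
    (ℓ : ℕ) :
    (∑' x : (H → ℕ) × Bool,
        proc VS r ℓ x * (∑ h : H, (x.1 h : ℝ≥0∞)))
      ≤ (n : ℝ≥0∞) * (1 + (d : ℝ≥0∞) / (r : ℝ≥0∞)) ^ ℓ := by
  subst hn
  induction ℓ with
  | zero => simp [proc, PMF.pure_apply]
  | succ ℓ ih =>
    calc _ ≤ (1 + d / r) * ∑' x, proc VS r ℓ x * ∑ h, (x.1 h : ℝ≥0∞) :=
          expected_total_proc_succ_le VS hr hd ℓ
      _ ≤ (1 + d / r) * (Fintype.card H * (1 + d / r) ^ ℓ) := by gcongr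
      _ = Fintype.card H * (1 + d / r) ^ (ℓ + 1) := by ring
end
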